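/- arXiv:2209.05102 — 4 statements merged into one kernel-verified Lean document; each statement's English description precedes it below -/
import Mathlib

section
/- For every vertex cover C of the infinite octagonal grid T₈ and all integers m, n ≥ 1, the set C ∩ ({0,…,2m−1} × {0,…,2n−1}) has at least 3·m·n elements. -/
/-- A vertex cover of a simple graph: every edge has at least one endpoint in `C`. -/
def IsVertexCover {V : Type*} (G : SimpleGraph V) (C : Set V) : Prop :=
  ∀ ⦃u v : V⦄, G.Adj u v → u ∈ C ∨ v ∈ C

/-- The box `{0,…,w−1} × {0,…,h−1}` (w columns, h rows). -/
def box (w h : ℕ) : Set (ℤ × ℤ) :=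
  Set.Ico (0 : ℤ) (w : ℤ) ×ˢ Set.Ico (0 : ℤ) (h : ℤ)

/-- Subgraph of `G` induced on a set `s` of vertices (kept on the same vertex type). -/
def finGrid (G : SimpleGraph (ℤ × ℤ)) (w h : ℕ) : SimpleGraph (ℤ × ℤ) where
  Adj p q := G.Adj p q ∧ p ∈ box w h ∧ q ∈ box w h
  symm := ⟨fun p q hpq => ⟨hpq.1.symm, hpq.2.2, hpq.2.1⟩⟩
  loopless := ⟨fun p hp => G.irrefl hp.1⟩

/-- The infinite octagonal grid (king graph on ℤ²). -/
def T8 : SimpleGraph (ℤ × ℤ) :=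
  SimpleGraph.fromRel (fun p q => |p.1 - q.1| ≤ 1 ∧ |p.2 - q.2| ≤ 1)

/-!
Split `{0,…,2m−1} × {0,…,2n−1}` into the `m·n` blocks `{2i, 2i+1} × {2j, 2j+1}`. Each block is a
4-clique of the king graph, and a vertex cover can miss at most one vertex of a clique, so `C`
contains at least three vertices of every block.
-/

open Finset

theorem IsVertexCover.card_le_card_filter_add_one_of_isClique {V : Type*} {G : SimpleGraph V}
    {C : Set V} [DecidablePred (· ∈ C)] (hC : IsVertexCover G C) {s : Finset V}
    (hs : G.IsClique (s : Set V)) : #s ≤ #(s.filter (· ∈ C)) + 1 := by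
  have hmiss : #(s.filter (· ∉ C)) ≤ 1 := card_le_one.2 fun a ha b hb => by
    rw [mem_filter] at ha hb
    by_contra hab
    exact (hC (hs ha.1 hb.1 hab)).elim ha.2 hb.2
  have := card_filter_add_card_filter_not (s := s) (· ∈ C)
  omega

namespace T8

noncomputable def block (b : ℤ × ℤ) : Finset (ℤ × ℤ) :=
  Icc (2 * b.1) (2 * b.1 + 1) ×ˢ Icc (2 * b.2) (2 * b.2 + 1)

theorem card_block (b : ℤ × ℤ) : #(block b) = 4 := by
  have two (a : ℤ) : (2 * a + 1 + 1 - 2 * a).toNat = 2 := by omega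
  simp [block, card_product, two]

theorem isClique_block (b : ℤ × ℤ) : T8.IsClique (block b : Set (ℤ × ℤ)) := by
  intro p hp q hq hpq
  simp only [block, coe_product, coe_Icc, Set.mem_prod, Set.mem_Icc] at hp hq
  exact ⟨hpq, Or.inl ⟨abs_le.2 ⟨by omega, by omega⟩, abs_le.2 ⟨by omega, by omega⟩⟩⟩

theorem three_le_card_filter_block {C : Set (ℤ × ℤ)} [DecidablePred (· ∈ C)]
    (hC : IsVertexCover T8 C) (b : ℤ × ℤ) : 3 ≤ #((block b).filter (· ∈ C)) := by
  have := hC.card_le_card_filter_add_one_of_isClique (isClique_block b)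
  rw [card_block] at this
  omega

def blockIndex (p : ℤ × ℤ) : ℤ × ℤ := (p.1 / 2, p.2 / 2)

theorem blockIndex_mem {m n : ℕ} {p : ℤ × ℤ} (hp : p ∈ Ico 0 (2 * m : ℤ) ×ˢ Ico 0 (2 * n : ℤ)) :
    blockIndex p ∈ Ico 0 (m : ℤ) ×ˢ Ico 0 (n : ℤ) := by
  simp only [blockIndex, mem_product, mem_Ico] at hp ⊢
  omega

theorem filter_blockIndex_eq_block {m n : ℕ} {b : ℤ × ℤ} (hb : b ∈ Ico 0 (m : ℤ) ×ˢ Ico 0 (n : ℤ)) :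
    (Ico 0 (2 * m : ℤ) ×ˢ Ico 0 (2 * n : ℤ)).filter (blockIndex · = b) = block b := by
  ext p
  simp only [blockIndex, block, mem_filter, mem_product, mem_Ico, mem_Icc, Prod.ext_iff] at hb ⊢
  omega

end T8

theorem stmt_5_general (C : Set (ℤ × ℤ)) (hcov : IsVertexCover T8 C)
    (m n : ℕ) :
    3 * m * n ≤ (C ∩ box (2 * m) (2 * n)).ncard := by
  classical
  set S := (Ico (0 : ℤ) (2 * m) ×ˢ Ico (0 : ℤ) (2 * n)).filter (· ∈ C)
  have hS : C ∩ box (2 * m) (2 * n) = S := by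
    ext p
    simp only [S, _root_.box, coe_filter, mem_product, mem_Ico, Set.mem_inter_iff, Set.mem_prod,
      Set.mem_Ico, Set.mem_ofPred_eq]
    tauto
  have hmaps : (S : Set (ℤ × ℤ)).MapsTo T8.blockIndex ↑(Ico (0 : ℤ) m ×ˢ Ico (0 : ℤ) n) :=
    fun p hp => T8.blockIndex_mem (mem_filter.1 hp).1
  rw [hS, Set.ncard_coe_finset, card_eq_sum_card_fiberwise hmaps]
  calc 3 * m * n = ∑ _b ∈ Ico (0 : ℤ) m ×ˢ Ico (0 : ℤ) n, 3 := by simp [card_product]; ring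
    _ ≤ _ := sum_le_sum fun b hb => by
      rw [filter_comm, T8.filter_blockIndex_eq_block hb]
      exact T8.three_le_card_filter_block hcov b

/-- Any vertex cover of the infinite octagonal grid meets `{0,…,2m−1} × {0,…,2n−1}` in at least
`3·m·n` vertices. -/
theorem stmt_5 (C : Set (ℤ × ℤ)) (hcov : IsVertexCover T8 C)
    (m n : ℕ) (hm : 1 ≤ m) (hn : 1 ≤ n) :
    3 * m * n ≤ (C ∩ box (2 * m) (2 * n)).ncard :=
  stmt_5_general C hcov m n
end

section
/- Let O₀ = {(x,y) ∈ ℤ × ℤ : y is even} and O₁ = {(x,y) ∈ ℤ × ℤ : y is odd}. Then {O₀, O₁} is a defense-closed family of vertex covers of the infinite hexagonal grid T₃, and for all m, n ≥ 1 each of O₀ and O₁ meets {0,…,m−1} × {0,…,2n−1} in exactly m·n vertices. -/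
/-- The infinite hexagonal grid. -/
def T3 : SimpleGraph (ℤ × ℤ) :=
  SimpleGraph.fromRel (fun p q =>
    q = (p.1, p.2 + 1) ∨
    ((4 : ℤ) ∣ p.2 ∧ q = (p.1 + 1, p.2 + 1)) ∨
    ((4 : ℤ) ∣ (p.2 - 2) ∧ q = (p.1 - 1, p.2 + 1)))

/-- A defense-closed family of vertex covers of `G`: every member is a vertex cover, and for
every member `S` and edge `{u,v}` with `u ∈ S`, `v ∉ S`, some member `S'` is obtained from `S`
by a bijection moving the guard on `u` to `v` and every other guard by at most one edge. -/
def IsDefenseClosedFamily {V : Type*} (G : SimpleGraph V) (F : Set (Set V)) : Prop :=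
  (∀ S ∈ F, IsVertexCover G S) ∧
  ∀ S ∈ F, ∀ u v : V, G.Adj u v → u ∈ S → v ∉ S →
    ∃ S' ∈ F, ∃ f : V → V, Set.BijOn f S S' ∧ f u = v ∧
      ∀ s ∈ S, f s = s ∨ G.Adj s (f s)

open Set

theorem isDefenseClosedFamily_of_moves {V : Type*} {G : SimpleGraph V} {F : Set (Set V)}
    (hcover : ∀ S ∈ F, IsVertexCover G S)
    (hmove : ∀ u v, G.Adj u v →
      ∃ φ : V ≃ V, φ u = v ∧ (∀ s, G.Adj s (φ s)) ∧ ∀ S ∈ F, φ '' S ∈ F) :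
    IsDefenseClosedFamily G F := by
  refine ⟨hcover, fun S hS u v huv _ _ => ?_⟩
  obtain ⟨φ, hφu, hφadj, hφF⟩ := hmove u v huv
  exact ⟨φ '' S, hφF S hS, φ, φ.injective.injOn.bijOn_image, hφu,
    fun s _ => Or.inr (hφadj s)⟩

namespace T3

def partner (p : ℤ × ℤ) : ℤ × ℤ :=
  if p.2 % 4 = 0 then (p.1 + 1, p.2 + 1)
  else if p.2 % 4 = 1 then (p.1 - 1, p.2 - 1)
  else if p.2 % 4 = 2 then (p.1 - 1, p.2 + 1)
  else (p.1 + 1, p.2 - 1)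

theorem partner_involutive : Function.Involutive partner := by
  rintro ⟨a, b⟩
  simp only [partner]
  split_ifs <;> simp only [Prod.mk.injEq] at * <;> omega

theorem adj_iff {p q : ℤ × ℤ} :
    T3.Adj p q ↔ q = (p.1, p.2 + 1) ∨ q = (p.1, p.2 - 1) ∨ q = partner p := by
  obtain ⟨a, b⟩ := p
  obtain ⟨c, d⟩ := q
  simp only [T3, SimpleGraph.fromRel_adj, partner, ne_eq, Prod.mk.injEq]
  split_ifs <;> simp only [Prod.mk.injEq] <;> omega

def rowUp : ℤ × ℤ ≃ ℤ × ℤ where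
  toFun p := (p.1, p.2 + 1)
  invFun p := (p.1, p.2 - 1)
  left_inv p := by simp
  right_inv p := by simp

theorem adj_rowUp (p : ℤ × ℤ) : T3.Adj p (rowUp p) := adj_iff.mpr (Or.inl rfl)

theorem adj_rowUp_symm (p : ℤ × ℤ) : T3.Adj p (rowUp.symm p) :=
  adj_iff.mpr (Or.inr (Or.inl rfl))

theorem adj_partner (p : ℤ × ℤ) : T3.Adj p (partner p) := adj_iff.mpr (Or.inr (Or.inr rfl))

theorem even_snd_iff_of_adj {p q : ℤ × ℤ} (h : T3.Adj p q) : Even q.2 ↔ ¬Even p.2 := by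
  have hrow : q.2 = p.2 + 1 ∨ q.2 = p.2 - 1 := by
    rcases adj_iff.mp h with rfl | rfl | rfl
    · exact Or.inl rfl
    · exact Or.inr rfl
    · unfold partner; split_ifs <;> simp
  rcases hrow with hq | hq <;> rw [hq]
  exacts [Int.even_add_one, Int.even_sub_one]

theorem isVertexCover_even : IsVertexCover T3 {p | Even p.2} := fun _ _ h => by
  have := even_snd_iff_of_adj h
  simp only [mem_ofPred_eq]
  tauto

theorem isVertexCover_odd : IsVertexCover T3 {p | Odd p.2} := fun _ _ h => by
  have := even_snd_iff_of_adj h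
  simp only [mem_ofPred_eq, ← Int.not_even_iff_odd]
  tauto

def rowParityClasses : Set (Set (ℤ × ℤ)) := {{p | Even p.2}, {p | Odd p.2}}

section Moves

variable {φ : ℤ × ℤ ≃ ℤ × ℤ} (hφ : ∀ p, T3.Adj p (φ p))
include hφ

theorem even_snd_symm_iff (q : ℤ × ℤ) : Even (φ.symm q).2 ↔ ¬Even q.2 :=
  even_snd_iff_of_adj (φ.apply_symm_apply q ▸ hφ (φ.symm q)).symm

theorem image_even_of_forall_adj : φ '' {p | Even p.2} = {p | Odd p.2} := by
  ext q
  rw [φ.image_eq_preimage_symm, mem_preimage, mem_ofPred_eq, mem_ofPred_eq,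
    even_snd_symm_iff hφ, Int.not_even_iff_odd]

theorem image_odd_of_forall_adj : φ '' {p | Odd p.2} = {p | Even p.2} := by
  ext q
  rw [φ.image_eq_preimage_symm, mem_preimage, mem_ofPred_eq, mem_ofPred_eq,
    ← Int.not_even_iff_odd, even_snd_symm_iff hφ, not_not]

theorem image_mem_rowParityClasses {S : Set (ℤ × ℤ)} (hS : S ∈ rowParityClasses) :
    φ '' S ∈ rowParityClasses := by
  rcases hS with rfl | rfl
  · exact Or.inr (image_even_of_forall_adj hφ)
  · exact Or.inl (image_odd_of_forall_adj hφ)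

end Moves

theorem isDefenseClosedFamily_rowParityClasses : IsDefenseClosedFamily T3 rowParityClasses := by
  refine isDefenseClosedFamily_of_moves ?_ fun u v h => ?_
  · rintro S (rfl | rfl)
    exacts [isVertexCover_even, isVertexCover_odd]
  · rcases adj_iff.mp h with rfl | rfl | rfl
    · exact ⟨rowUp, rfl, adj_rowUp, fun _ => image_mem_rowParityClasses adj_rowUp⟩
    · exact ⟨rowUp.symm, rfl, adj_rowUp_symm,
        fun _ => image_mem_rowParityClasses adj_rowUp_symm⟩
    · exact ⟨partner_involutive.toPerm, rfl, adj_partner,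
        fun _ => image_mem_rowParityClasses adj_partner⟩

end T3

theorem ncard_residue_rows_inter_box (m n k : ℕ) {r : ℤ} (hr₀ : 0 ≤ r) (hrk : r < k) :
    ({p : ℤ × ℤ | p.2 % k = r} ∩ box m (k * n)).ncard = m * n := by
  have hk : (0 : ℤ) < k := hr₀.trans_lt hrk
  have hinj : Function.Injective (fun q : ℤ × ℤ => (q.1, k * q.2 + r)) := by
    rintro ⟨a, b⟩ ⟨c, d⟩ h
    simp only [Prod.mk.injEq, add_left_inj, mul_right_inj' hk.ne'] at h
    rw [h.1, h.2]
  have himage : {p : ℤ × ℤ | p.2 % k = r} ∩ box m (k * n) =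
      (fun q : ℤ × ℤ => (q.1, k * q.2 + r)) '' box m n := by
    ext ⟨x, y⟩
    simp only [box, mem_inter_iff, mem_ofPred_eq, mem_prod, mem_Ico, mem_image, Prod.exists,
      Prod.mk.injEq, Nat.cast_mul]
    constructor
    · rintro ⟨hy, hx, hy₀, hyn⟩
      have hyn' : y < n * k := by linarith
      refine ⟨x, y / k, ⟨hx, Int.ediv_nonneg hy₀ hk.le, Int.ediv_lt_of_lt_mul hk hyn'⟩, rfl, ?_⟩
      rw [← hy, Int.mul_ediv_add_emod]
    · rintro ⟨a, b, ⟨hx, hb₀, hbn⟩, rfl, rfl⟩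
      refine ⟨?_, hx, by positivity, by nlinarith⟩
      rw [Int.mul_add_emod_self_left, Int.emod_eq_of_lt hr₀ hrk]
  rw [himage, ncard_image_of_injective _ hinj, box, ncard_prod, ← Finset.coe_Ico,
    ← Finset.coe_Ico, ncard_coe_finset, ncard_coe_finset, Int.card_Ico, Int.card_Ico]
  simp only [sub_zero, Int.toNat_natCast]

/-- `{O₀, O₁}` (even/odd `y`) is a defense-closed family of vertex covers of the infinite
hexagonal grid, each member meeting `{0,…,m−1} × {0,…,2n−1}` in exactly `m·n` vertices. -/
theorem stmt_7 :
    IsDefenseClosedFamily T3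
      {{p : ℤ × ℤ | Even p.2}, {p : ℤ × ℤ | Odd p.2}} ∧
    ∀ m n : ℕ, 1 ≤ m → 1 ≤ n →
      ({p : ℤ × ℤ | Even p.2} ∩ box m (2 * n)).ncard = m * n ∧
      ({p : ℤ × ℤ | Odd p.2} ∩ box m (2 * n)).ncard = m * n := by
  refine ⟨T3.isDefenseClosedFamily_rowParityClasses, fun m n _ _ => ⟨?_, ?_⟩⟩
  · simpa only [Int.even_iff, Nat.cast_ofNat] using
      ncard_residue_rows_inter_box m n 2 (r := 0) le_rfl two_pos
  · simpa only [Int.odd_iff, Nat.cast_ofNat] using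
      ncard_residue_rows_inter_box m n 2 (r := 1) zero_le_one one_lt_two
end

section
/- Let C = {(x,y) ∈ ℤ × ℤ : x is odd} ∪ {(x,y) ∈ ℤ × ℤ : x is even and y is even}. Then the family {C + t : t ∈ ℤ × ℤ} of all translates of C is a defense-closed family of vertex covers of the infinite octagonal grid T₈, and for all m, n ≥ 1 each translate of C meets {0,…,2m−1} × {0,…,2n−1} in exactly 3·m·n vertices. -/
/-- The optimal cover of the octagonal grid: odd columns entirely, even columns on even rows. -/
def C9 : Set (ℤ × ℤ) :=
  {p : ℤ × ℤ | Odd p.1} ∪ {p : ℤ × ℤ | Even p.1 ∧ Even p.2}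

/-! The cover `C9` misses exactly the vertices with even first and odd second coordinate, and no
two of these are king-adjacent, so `C9` is a vertex cover of `T8`. Since `T8` is invariant under
translations, an attack on `v` from a guard on `u` is answered by shifting every guard by `v - u`:
this maps a translate of `C9` onto another translate and moves each guard along an edge parallel
to `uv`. Finally a translate `C9 + t` misses exactly the vertices `(x, y)` with `x ≡ t.1` and
`y ≢ t.2 (mod 2)`; the box `[0, 2m) × [0, 2n)` contains `4mn` vertices, `mn` of them missed. -/

theorem Int.card_Ico_filter_modEq_of_mul {r : ℤ} (hr : 0 < r) (a v : ℤ) (m : ℕ) :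
    ({x ∈ Finset.Ico a (a + r * m) | x ≡ v [ZMOD r]} : Finset ℤ).card = m := by
  have hr' : (r : ℚ) ≠ 0 := by positivity
  have hshift : (((a + r * m : ℤ) : ℚ) - v) / r = (a - v : ℚ) / r + m := by
    push_cast; field_simp; ring
  zify
  rw [Int.Ico_filter_modEq_card _ _ hr, hshift, Int.ceil_add_natCast]
  simp

theorem isVertexCover_image_add_right {V : Type*} [AddGroup V] {G : SimpleGraph V}
    (hG : ∀ u v w : V, G.Adj u v → G.Adj (u + w) (v + w)) {C : Set V}
    (hC : IsVertexCover G C) (t : V) : IsVertexCover G ((fun p => p + t) '' C) := by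
  intro u v huv
  simpa [Set.image_add_right] using hC (hG u v (-t) huv)

theorem isDefenseClosedFamily_translates {V : Type*} [AddCommGroup V] {G : SimpleGraph V}
    (hG : ∀ u v w : V, G.Adj u v → G.Adj (u + w) (v + w)) {C : Set V}
    (hC : IsVertexCover G C) :
    IsDefenseClosedFamily G {S | ∃ t : V, S = (fun p => p + t) '' C} := by
  refine ⟨fun S ⟨t, hS⟩ => hS ▸ isVertexCover_image_add_right hG hC t, ?_⟩
  rintro S ⟨t, rfl⟩ u v huv - -
  refine ⟨(fun p => p + (t + (v - u))) '' C, ⟨_, rfl⟩, (· + (v - u)), ?_, add_sub_cancel u v, ?_⟩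
  · convert (add_left_injective (v - u)).injOn.bijOn_image using 1
    simp only [Set.image_image, add_assoc]
  · intro s _
    right
    simpa only [add_sub_cancel, add_sub_left_comm v s u] using hG u v (s - u) huv

theorem T8_adj {p q : ℤ × ℤ} : T8.Adj p q ↔ p ≠ q ∧ |p.1 - q.1| ≤ 1 ∧ |p.2 - q.2| ≤ 1 := by
  simp [T8, abs_sub_comm]

theorem T8_adj_add_right (p q w : ℤ × ℤ) (h : T8.Adj p q) : T8.Adj (p + w) (q + w) := by
  simpa [T8_adj] using h

theorem compl_C9 : C9ᶜ = {p : ℤ × ℤ | Even p.1 ∧ Odd p.2} := by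
  ext p
  simp only [C9, Set.mem_compl_iff, Set.mem_union, Set.mem_ofPred_eq, ← Int.not_even_iff_odd]
  tauto

theorem isVertexCover_C9 : IsVertexCover T8 C9 := by
  intro u v huv
  by_contra! h
  simp only [← Set.mem_compl_iff, compl_C9, Set.mem_ofPred_eq, Int.even_iff, Int.odd_iff] at h
  obtain ⟨hne, h1, h2⟩ := T8_adj.1 huv
  rw [abs_le] at h1 h2
  exact hne (Prod.ext (by omega) (by omega))

theorem ncard_box (w h : ℕ) : (box w h).ncard = w * h := by
  rw [box, Set.ncard_prod, ← Finset.coe_Ico, ← Finset.coe_Ico, Set.ncard_coe_finset,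
    Set.ncard_coe_finset]
  simp

theorem box_diff_image_add_right_C9 (m n : ℕ) (t : ℤ × ℤ) :
    box (2 * m) (2 * n) \ (fun p => p + t) '' C9 =
      ↑({x ∈ Finset.Ico 0 (2 * (m : ℤ)) | x ≡ t.1 [ZMOD 2]} ×ˢ
        {y ∈ Finset.Ico 0 (2 * (n : ℤ)) | y ≡ t.2 + 1 [ZMOD 2]}) := by
  ext ⟨x, y⟩
  simp only [Set.mem_sdiff, Set.image_add_right, Set.mem_preimage, ← Set.mem_compl_iff, compl_C9,
    box, Set.mem_prod, Set.mem_Ico, Set.mem_ofPred_eq, Prod.fst_add, Prod.fst_neg,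
    Prod.snd_add, Prod.snd_neg, Int.even_iff, Int.odd_iff, Finset.coe_product, Finset.mem_coe,
    Finset.mem_filter, Finset.mem_Ico]
  unfold Int.ModEq
  omega

theorem ncard_image_add_right_C9_inter_box (m n : ℕ) (t : ℤ × ℤ) :
    (((fun p => p + t) '' C9) ∩ box (2 * m) (2 * n)).ncard = 3 * m * n := by
  have hcount (v : ℤ) (k : ℕ) :
      ({x ∈ Finset.Ico 0 (2 * (k : ℤ)) | x ≡ v [ZMOD 2]} : Finset ℤ).card = k := by
    simpa using Int.card_Ico_filter_modEq_of_mul two_pos 0 v k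
  have hsplit := Set.ncard_inter_add_ncard_sdiff_eq_ncard (box (2 * m) (2 * n))
    ((fun p => p + t) '' C9) ((Set.finite_Ico _ _).prod (Set.finite_Ico _ _))
  rw [box_diff_image_add_right_C9, Set.ncard_coe_finset, Finset.card_product,
    hcount, hcount, ncard_box, Set.inter_comm] at hsplit
  linarith

/-- The translates of `C9` form a defense-closed family of vertex covers of the infinite
octagonal grid, each translate meeting `{0,…,2m−1} × {0,…,2n−1}` in exactly `3mn` vertices. -/
theorem stmt_9 :
    IsDefenseClosedFamily T8 {S | ∃ t : ℤ × ℤ, S = (fun p => p + t) '' C9} ∧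
    ∀ m n : ℕ, 1 ≤ m → 1 ≤ n → ∀ t : ℤ × ℤ,
      (((fun p => p + t) '' C9) ∩ box (2 * m) (2 * n)).ncard = 3 * m * n :=
  ⟨isDefenseClosedFamily_translates T8_adj_add_right isVertexCover_C9,
    fun m n _ _ t => ncard_image_add_right_C9_inter_box m n t⟩
end

section
/- For every integer w ≥ 2, every vertex cover C of the two-row finite triangular grid T₆(2,w) satisfies 3·|C| ≥ 4w − 2. -/
/-- The infinite triangular grid. -/
def T6 : SimpleGraph (ℤ × ℤ) :=
  SimpleGraph.fromRel (fun p q =>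
    (q.1 - p.1, q.2 - p.2) ∈
      ({(1, 0), (-1, 0), (0, 1), (0, -1), (1, 1), (-1, -1)} : Set (ℤ × ℤ)))

/-!
Write `c a ∈ {0, 1, 2}` for the number of vertices of `C` in column `a`. The vertical edge of
a column gives `c a ≥ 1`, and three consecutive columns contain the two disjoint triangles
`(a,0) (a,1) (a+1,1)` and `(a+1,0) (a+2,0) (a+2,1)`, each of which needs two vertices of `C`,
so `c a + c (a+1) + c (a+2) ≥ 4`. Grouping the columns into consecutive triples with
`r ≤ 2` columns left over gives `3 |C| ≥ 4 (w - r) + 3 r ≥ 4 w - 2`.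
-/

theorem four_mul_le_three_mul_sum_range_add_two (c : ℕ → ℕ) :
    ∀ w : ℕ, (∀ a < w, 1 ≤ c a) →
      (∀ a, a + 2 < w → 4 ≤ c a + c (a + 1) + c (a + 2)) →
      4 * w ≤ 3 * ∑ a ∈ Finset.range w, c a + 2
  | 0, _, _ => by simp
  | 1, hc, _ => by simp only [Finset.sum_range_one]; linarith [hc 0 one_pos]
  | 2, hc, _ => by
    simp only [Finset.sum_range_succ, Finset.sum_range_zero]
    linarith [hc 0 two_pos, hc 1 one_lt_two]
  | w + 3, hc, hc₃ => by
    have ih := four_mul_le_three_mul_sum_range_add_two c w (fun a ha => hc a (by omega))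
      (fun a ha => hc₃ a (by omega))
    have := hc₃ w (by omega)
    simp only [Finset.sum_range_succ] at ih ⊢
    omega

theorem two_le_ite_add_ite_add_ite {P Q R : Prop} [Decidable P] [Decidable Q] [Decidable R]
    (hPQ : P ∨ Q) (hQR : Q ∨ R) (hPR : P ∨ R) :
    2 ≤ (if P then 1 else 0) + (if Q then 1 else 0) + (if R then 1 else 0) := by
  split_ifs <;> tauto

theorem mk_natCast_mem_box {w h a b : ℕ} :
    ((a : ℤ), (b : ℤ)) ∈ box w h ↔ a < w ∧ b < h := by
  simp [box]

theorem T6_adj_of_sub_mem {p q : ℤ × ℤ}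
    (h : (q.1 - p.1, q.2 - p.2) ∈ ({(1, 0), (0, 1), (1, 1)} : Set (ℤ × ℤ))) :
    T6.Adj p q := by
  simp only [T6, SimpleGraph.fromRel_adj, Set.mem_insert_iff, Set.mem_singleton_iff,
    Prod.ext_iff] at h ⊢
  exact ⟨by rintro rfl; simp at h, Or.inl (by omega)⟩

namespace TwoRowCover

variable {w : ℕ} {C : Set (ℤ × ℤ)}

open scoped Classical in
noncomputable def columnCount (C : Set (ℤ × ℤ)) (a : ℕ) : ℕ :=
  (if ((a : ℤ), (0 : ℤ)) ∈ C then 1 else 0) + (if ((a : ℤ), (1 : ℤ)) ∈ C then 1 else 0)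

theorem ncard_eq_sum_columnCount (hsub : C ⊆ box w 2) :
    C.ncard = ∑ a ∈ Finset.range w, columnCount C a := by
  classical
  set e : ℕ × ℕ → ℤ × ℤ := fun p => ((p.1 : ℤ), (p.2 : ℤ))
  have he : Function.Injective e := fun p q hpq => by
    simp only [e, Prod.mk.injEq, Nat.cast_inj] at hpq; exact Prod.ext hpq.1 hpq.2
  have hC : C = e '' ↑((Finset.range w ×ˢ Finset.range 2).filter (e · ∈ C)) := by
    ext ⟨x, y⟩
    refine ⟨fun hxy => ?_, ?_⟩
    · obtain ⟨⟨hx0, hxw⟩, hy0, hy2⟩ := hsub hxy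
      exact ⟨(x.toNat, y.toNat), by simp [e, hx0, hy0, hxy]; omega, by simp [e, hx0, hy0]⟩
    · rintro ⟨p, hp, hpxy⟩; exact hpxy ▸ (Finset.mem_filter.1 hp).2
  conv_lhs => rw [hC, Set.ncard_image_of_injective _ he, Set.ncard_coe_finset]
  rw [Finset.card_filter, Finset.sum_product]
  refine Finset.sum_congr rfl fun a _ => ?_
  simp only [Finset.sum_range_succ, Finset.sum_range_zero, columnCount, e, Nat.cast_zero,
    Nat.cast_one, zero_add]

variable (hcov : IsVertexCover (finGrid T6 w 2) C)
include hcov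

theorem mem_or_mem_of_step (a b a' b' : ℕ) (ha' : a' < w) (hb' : b' < 2)
    (hstep : (a' = a + 1 ∧ b' = b) ∨ (a' = a ∧ b' = b + 1) ∨ (a' = a + 1 ∧ b' = b + 1)) :
    ((a : ℤ), (b : ℤ)) ∈ C ∨ ((a' : ℤ), (b' : ℤ)) ∈ C := by
  refine hcov ⟨T6_adj_of_sub_mem ?_, mk_natCast_mem_box.2 (by omega),
    mk_natCast_mem_box.2 ⟨ha', hb'⟩⟩
  rcases hstep with ⟨rfl, rfl⟩ | ⟨rfl, rfl⟩ | ⟨rfl, rfl⟩ <;> simp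

theorem one_le_columnCount {a : ℕ} (ha : a < w) : 1 ≤ columnCount C a := by
  have := mem_or_mem_of_step hcov a 0 a 1 ha one_lt_two (by simp)
  unfold columnCount; split_ifs <;> simp_all

theorem four_le_columnCount_add_columnCount_add_columnCount {a : ℕ} (ha : a + 2 < w) :
    4 ≤ columnCount C a + columnCount C (a + 1) + columnCount C (a + 2) := by
  classical
  have left := two_le_ite_add_ite_add_ite
    (mem_or_mem_of_step hcov a 0 a 1 (by omega) one_lt_two (by simp))
    (mem_or_mem_of_step hcov a 1 (a + 1) 1 (by omega) one_lt_two (by simp))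
    (mem_or_mem_of_step hcov a 0 (a + 1) 1 (by omega) one_lt_two (by simp))
  have right := two_le_ite_add_ite_add_ite
    (mem_or_mem_of_step hcov (a + 1) 0 (a + 2) 0 ha two_pos (by simp))
    (mem_or_mem_of_step hcov (a + 2) 0 (a + 2) 1 ha one_lt_two (by simp))
    (mem_or_mem_of_step hcov (a + 1) 0 (a + 2) 1 ha one_lt_two (by simp))
  simp only [columnCount] at left right ⊢
  push_cast at left right ⊢
  omega

end TwoRowCover

open TwoRowCover in
theorem stmt_10_general (w : ℕ)
    (C : Set (ℤ × ℤ)) (hsub : C ⊆ box w 2)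
    (hcov : IsVertexCover (finGrid T6 w 2) C) :
    4 * w - 2 ≤ 3 * C.ncard := by
  have := four_mul_le_three_mul_sum_range_add_two (columnCount C) w
    (fun _ => one_le_columnCount hcov)
    (fun _ => four_le_columnCount_add_columnCount_add_columnCount hcov)
  rw [ncard_eq_sum_columnCount hsub]
  omega

/-- Every vertex cover of the two-row triangular grid `T₆(2,w)` satisfies `3|C| ≥ 4w − 2`. -/
theorem stmt_10 (w : ℕ) (hw : 2 ≤ w)
    (C : Set (ℤ × ℤ)) (hsub : C ⊆ box w 2)
    (hcov : IsVertexCover (finGrid T6 w 2) C) :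
    4 * w - 2 ≤ 3 * C.ncard :=
  stmt_10_general w C hsub hcov
end
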